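/- Fix δ ∈ (0,1) and suppose the realization of the data satisfies ‖P_T^{r_i} − 𝔔_T^{r_i}‖_F ≤ S(r_i, δ) for every integer i ≥ 0 with 2^i ≤ T, where r_i = 2^i. If i ≥ 0 satisfies 2^{i+1} ≤ T and ‖𝔔_T^{r_i} − 𝔔_T^{r_{i+1}}‖_F ≤ 4·S(r_i, δ), then U(r_{i+1}, δ) ≤ U(r_i, δ). -/

import Mathlib

open MeasureTheory

/-- The discrepancy `‖P − Q‖_F`. -/
noncomputable def dF {ι Z : Type*} [MeasurableSpace Z] (F : ι → Z → ℝ)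
    (P Q : Measure Z) : ℝ :=
  ⨆ n, |(∫ z, F n z ∂P) - ∫ z, F n z ∂Q|

/-- The average distribution `P_T^r = (1/r)·Σ_{t=T−r+1}^T P_t`. -/
noncomputable def avgMeas {Z : Type*} [MeasurableSpace Z]
    (P : ℕ → Measure Z) (T r : ℕ) : Measure Z :=
  (r : ENNReal)⁻¹ • ∑ t ∈ Finset.Icc (T - r + 1) T, P t

/-- Empirical average `(1/r)·Σ_{t=T−r+1}^T f(Z_t(ω))`. -/
noncomputable def empAvg {Z Ω : Type*} (Zs : ℕ → Ω → Z) (T r : ℕ)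
    (f : Z → ℝ) (ω : Ω) : ℝ :=
  (r : ℝ)⁻¹ * ∑ t ∈ Finset.Icc (T - r + 1) T, f (Zs t ω)

/-- `‖P − 𝔔_T^r(ω)‖_F`. -/
noncomputable def dPE {ι Z Ω : Type*} [MeasurableSpace Z] (F : ι → Z → ℝ)
    (P : Measure Z) (Zs : ℕ → Ω → Z) (T r : ℕ) (ω : Ω) : ℝ :=
  ⨆ n, |(∫ z, F n z ∂P) - empAvg Zs T r (F n) ω|

/-- `‖𝔔_T^r(ω) − 𝔔_T^s(ω)‖_F`, discrepancy between two empirical distributions. -/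
noncomputable def dEE {ι Z Ω : Type*} (F : ι → Z → ℝ) (Zs : ℕ → Ω → Z)
    (T r s : ℕ) (ω : Ω) : ℝ :=
  ⨆ n, |empAvg Zs T r (F n) ω - empAvg Zs T s (F n) ω|

/-- `S(r, δ)`. -/
noncomputable def Sfun (C1 C2 r δ : ℝ) : ℝ :=
  (C1 + C2 * Real.sqrt (2 * Real.log (Real.pi ^ 2 / (6 * δ)))) / Real.sqrt r
    + C2 * Real.sqrt (2 * Real.log (Real.logb 2 r + 10) / r)

/-- `U(r, δ) = 21·S(r, δ) + ‖P_T − P_T^r‖_F`. -/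
noncomputable def Ufun {ι Z : Type*} [MeasurableSpace Z] (F : ι → Z → ℝ)
    (P : ℕ → Measure Z) (T : ℕ) (C1 C2 : ℝ) (r : ℕ) (δ : ℝ) : ℝ :=
  21 * Sfun C1 C2 r δ + dF F (P T) (avgMeas P T r)

lemma lnkey (i : ℕ) : 121 * Real.log ((i:ℝ) + 11) ≤ 128 * Real.log ((i:ℝ) + 10) := by
  set x : ℝ := (i:ℝ) + 10 with hxdef
  have hx10 : (10:ℝ) ≤ x := by simp [hxdef]
  have hx0 : (0:ℝ) < x := by linarith
  have hmul : x + 1 = x * (1 + 1/x) := by field_simp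
  have h1 : Real.log (x+1) = Real.log x + Real.log (1 + 1/x) := by
    rw [hmul, Real.log_mul hx0.ne' (by positivity)]
  have h2 : Real.log (1 + 1/x) ≤ 1/x := by
    have := Real.log_le_sub_one_of_pos (show (0:ℝ) < 1 + 1/x by positivity)
    linarith
  have h3 : (2:ℝ) ≤ Real.log x := by
    rw [Real.le_log_iff_exp_le hx0]
    have h := Real.exp_one_lt_d9
    have he : Real.exp 2 = Real.exp 1 * Real.exp 1 := by rw [← Real.exp_add]; norm_num
    nlinarith [Real.exp_pos 1]
  have h4 : 1/x ≤ 1/10 := by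
    apply one_div_le_one_div_of_le <;> linarith
  have hxx : (i:ℝ) + 11 = x + 1 := by rw [hxdef]; ring
  rw [hxx, h1]
  linarith

lemma logb_two_pow (k : ℕ) : Real.logb 2 ((2:ℝ)^k) = k := by
  rw [Real.logb_pow, Real.logb_self_eq_one] <;> norm_num

lemma Skey (C1 C2 δ : ℝ) (hC1 : 0 ≤ C1) (hC2 : 0 ≤ C2) (i : ℕ) :
    22 * Sfun C1 C2 ((2:ℝ)^(i+1)) δ ≤ 16 * Sfun C1 C2 ((2:ℝ)^i) δ := by
  have h2i : (0:ℝ) < (2:ℝ)^i := by positivity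
  have h2i' : (0:ℝ) < (2:ℝ)^(i+1) := by positivity
  set Cδ := C1 + C2 * Real.sqrt (2 * Real.log (Real.pi ^ 2 / (6 * δ))) with hCδdef
  have hCδ : 0 ≤ Cδ := by
    rw [hCδdef]
    exact add_nonneg hC1 (mul_nonneg hC2 (Real.sqrt_nonneg _))
  rw [Sfun, Sfun, logb_two_pow, logb_two_pow]
  have hs : (0:ℝ) < Real.sqrt ((2:ℝ)^i) := Real.sqrt_pos.2 h2i
  have hs' : (0:ℝ) < Real.sqrt ((2:ℝ)^(i+1)) := Real.sqrt_pos.2 h2i'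
  have t1 : 22 * (Cδ / Real.sqrt ((2:ℝ)^(i+1))) ≤ 16 * (Cδ / Real.sqrt ((2:ℝ)^i)) := by
    rw [mul_div_assoc', mul_div_assoc', div_le_div_iff₀ hs' hs]
    have e1 : (22:ℝ) * Cδ * Real.sqrt ((2:ℝ)^i) = Cδ * Real.sqrt (484 * (2:ℝ)^i) := by
      rw [show (484:ℝ) * (2:ℝ)^i = 22^2 * (2:ℝ)^i by ring, Real.sqrt_mul (by positivity),
        Real.sqrt_sq (by norm_num)]
      ring
    have e2 : (16:ℝ) * Cδ * Real.sqrt ((2:ℝ)^(i+1)) = Cδ * Real.sqrt (512 * (2:ℝ)^i) := by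
      rw [show (512:ℝ) * (2:ℝ)^i = 16^2 * (2:ℝ)^(i+1) by ring, Real.sqrt_mul (by positivity),
        Real.sqrt_sq (by norm_num)]
      ring
    rw [e1, e2]
    apply mul_le_mul_of_nonneg_left _ hCδ
    exact Real.sqrt_le_sqrt (by nlinarith)
  have t2 : 22 * (C2 * Real.sqrt (2 * Real.log ((↑(i+1):ℝ) + 10) / (2:ℝ)^(i+1)))
      ≤ 16 * (C2 * Real.sqrt (2 * Real.log ((i:ℝ) + 10) / (2:ℝ)^i)) := by
    have hl1 : (0:ℝ) ≤ Real.log ((↑(i+1):ℝ) + 10) := Real.log_nonneg (by push_cast; linarith [Nat.cast_nonneg (α := ℝ) i])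
    have hl0 : (0:ℝ) ≤ Real.log ((i:ℝ) + 10) := Real.log_nonneg (by linarith [Nat.cast_nonneg (α := ℝ) i])
    have e1 : (22:ℝ) * Real.sqrt (2 * Real.log ((↑(i+1):ℝ) + 10) / (2:ℝ)^(i+1))
        = Real.sqrt (484 * (2 * Real.log ((↑(i+1):ℝ) + 10) / (2:ℝ)^(i+1))) := by
      rw [show (484:ℝ) = 22^2 by norm_num, Real.sqrt_mul (by positivity), Real.sqrt_sq (by norm_num)]
    have e2 : (16:ℝ) * Real.sqrt (2 * Real.log ((i:ℝ) + 10) / (2:ℝ)^i)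
        = Real.sqrt (256 * (2 * Real.log ((i:ℝ) + 10) / (2:ℝ)^i)) := by
      rw [show (256:ℝ) = 16^2 by norm_num, Real.sqrt_mul (by positivity), Real.sqrt_sq (by norm_num)]
    have key : 484 * (2 * Real.log ((↑(i+1):ℝ) + 10) / (2:ℝ)^(i+1))
        ≤ 256 * (2 * Real.log ((i:ℝ) + 10) / (2:ℝ)^i) := by
      have hln := lnkey i
      have hc : ((↑(i+1):ℝ)) + 10 = (i:ℝ) + 11 := by push_cast; ring
      rw [hc, pow_succ]
      have lhs : 484 * (2 * Real.log ((i:ℝ)+11) / ((2:ℝ)^i*2)) = 968 * Real.log ((i:ℝ)+11) / ((2:ℝ)^i*2) := by ring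
      have rhs : 256 * (2 * Real.log ((i:ℝ)+10) / (2:ℝ)^i) = 512 * Real.log ((i:ℝ)+10) / (2:ℝ)^i := by ring
      rw [lhs, rhs, div_le_div_iff₀ (by positivity) h2i]
      nlinarith [mul_le_mul_of_nonneg_right hln h2i.le]
    calc 22 * (C2 * Real.sqrt (2 * Real.log ((↑(i+1):ℝ) + 10) / (2:ℝ)^(i+1)))
        = C2 * (22 * Real.sqrt (2 * Real.log ((↑(i+1):ℝ) + 10) / (2:ℝ)^(i+1))) := by ring
      _ ≤ C2 * (16 * Real.sqrt (2 * Real.log ((i:ℝ) + 10) / (2:ℝ)^i)) := by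
          apply mul_le_mul_of_nonneg_left _ hC2
          rw [e1, e2]
          exact Real.sqrt_le_sqrt key
      _ = 16 * (C2 * Real.sqrt (2 * Real.log ((i:ℝ) + 10) / (2:ℝ)^i)) := by ring
  push_cast at t2 ⊢
  linarith

lemma avgMeas_prob {Z : Type*} [MeasurableSpace Z] (P : ℕ → Measure Z)
    (hP : ∀ t, IsProbabilityMeasure (P t)) (T r : ℕ) (hr1 : 1 ≤ r) (hrT : r ≤ T) :
    IsProbabilityMeasure (avgMeas P T r) := by
  constructor
  rw [avgMeas, Measure.smul_apply, Measure.coe_finset_sum]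
  simp only [Finset.sum_apply]
  have h1 : ∀ t ∈ Finset.Icc (T - r + 1) T, P t Set.univ = 1 := fun t _ => (hP t).measure_univ
  rw [Finset.sum_congr rfl h1, Finset.sum_const, Nat.card_Icc]
  have h2 : T + 1 - (T - r + 1) = r := by omega
  rw [h2, nsmul_eq_mul, mul_one]
  exact ENNReal.inv_mul_cancel (by exact_mod_cast Nat.one_le_iff_ne_zero.mp hr1) (by simp)

lemma abs_integral_le' {Z : Type*} [MeasurableSpace Z] (F : Z → ℝ) (B : ℝ)
    (hFbdd : ∀ z, |F z| ≤ B) (μ : Measure Z) [IsProbabilityMeasure μ] :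
    |∫ z, F z ∂μ| ≤ B := by
  have := norm_integral_le_of_norm_le_const (μ := μ) (f := F) (C := B)
    (Filter.Eventually.of_forall fun z => by simpa using hFbdd z)
  simpa using this

lemma abs_empAvg_le {Z Ω : Type*} (Zs : ℕ → Ω → Z) (T r : ℕ) (f : Z → ℝ) (ω : Ω)
    (B : ℝ) (hf : ∀ z, |f z| ≤ B) (hr1 : 1 ≤ r) (hrT : r ≤ T) :
    |empAvg Zs T r f ω| ≤ B := by
  have hcard : (Finset.Icc (T - r + 1) T).card = r := by rw [Nat.card_Icc]; omega
  have hr0 : (0:ℝ) < (r:ℝ) := by exact_mod_cast hr1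
  rw [empAvg, abs_mul, abs_of_nonneg (by positivity : (0:ℝ) ≤ (r:ℝ)⁻¹)]
  calc (r:ℝ)⁻¹ * |∑ t ∈ Finset.Icc (T - r + 1) T, f (Zs t ω)|
      ≤ (r:ℝ)⁻¹ * ∑ t ∈ Finset.Icc (T - r + 1) T, |f (Zs t ω)| := by
        gcongr; exact Finset.abs_sum_le_sum_abs _ _
    _ ≤ (r:ℝ)⁻¹ * ∑ t ∈ Finset.Icc (T - r + 1) T, B := by
        gcongr with t ht; exact hf _
    _ = B := by rw [Finset.sum_const, hcard, nsmul_eq_mul]; field_simp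

/-- on the good event, if the empirical discrepancy between
windows `2^i` and `2^{i+1}` is at most `4·S(2^i, δ)`, then doubling the window
does not increase the inflated upper bound `U`. -/
theorem stmt2 {Z Ω : Type*} [MeasurableSpace Z]
    (F : ℕ → Z → ℝ) (hFmeas : ∀ n, Measurable (F n))
    (B : ℝ) (hFbdd : ∀ n z, |F n z| ≤ B)
    (T : ℕ) (hT : 1 ≤ T) (P : ℕ → Measure Z)
    (hP : ∀ t, IsProbabilityMeasure (P t))
    (Zs : ℕ → Ω → Z) (ω : Ω)
    (C1 C2 : ℝ) (hC1 : 0 ≤ C1) (hC2 : 0 ≤ C2)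
    (δ : ℝ) (hδ0 : 0 < δ) (hδ1 : δ < 1)
    (hgood : ∀ i : ℕ, 2 ^ i ≤ T →
      dPE F (avgMeas P T (2 ^ i)) Zs T (2 ^ i) ω ≤ Sfun C1 C2 (2 ^ i : ℕ) δ)
    (i : ℕ) (hi : 2 ^ (i + 1) ≤ T)
    (hsmall : dEE F Zs T (2 ^ i) (2 ^ (i + 1)) ω ≤ 4 * Sfun C1 C2 (2 ^ i : ℕ) δ) :
    Ufun F P T C1 C2 (2 ^ (i + 1) : ℕ) δ ≤ Ufun F P T C1 C2 (2 ^ i : ℕ) δ := by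
  set r : ℕ := 2 ^ i with hrdef
  set r' : ℕ := 2 ^ (i + 1) with hr'def
  have hrT : r ≤ T := le_trans (Nat.pow_le_pow_right (by norm_num) (Nat.le_succ i)) hi
  have hr1 : 1 ≤ r := Nat.one_le_two_pow
  have hr'1 : 1 ≤ r' := Nat.one_le_two_pow
  haveI hprob_r : IsProbabilityMeasure (avgMeas P T r) := avgMeas_prob P hP T r hr1 hrT
  haveI hprob_r' : IsProbabilityMeasure (avgMeas P T r') := avgMeas_prob P hP T r' hr'1 hi
  haveI hprob_T : IsProbabilityMeasure (P T) := hP T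
  -- bounds for BddAbove
  have hIb : ∀ (μ : Measure Z) (_ : IsProbabilityMeasure μ) (n : ℕ), |∫ z, F n z ∂μ| ≤ B :=
    fun μ hμ n => @abs_integral_le' Z _ (F n) B (hFbdd n) μ hμ
  have hEb : ∀ (k : ℕ), 1 ≤ k → k ≤ T → ∀ n, |empAvg Zs T k (F n) ω| ≤ B :=
    fun k hk1 hkT n => abs_empAvg_le Zs T k (F n) ω B (hFbdd n) hk1 hkT
  have bddIE : ∀ (μ : Measure Z) (_ : IsProbabilityMeasure μ) (k : ℕ), 1 ≤ k → k ≤ T →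
      BddAbove (Set.range fun n => |(∫ z, F n z ∂μ) - empAvg Zs T k (F n) ω|) := by
    intro μ hμ k hk1 hkT
    refine ⟨2 * B, ?_⟩
    rintro x ⟨n, rfl⟩
    have := hIb μ hμ n
    have := hEb k hk1 hkT n
    calc |(∫ z, F n z ∂μ) - empAvg Zs T k (F n) ω|
        ≤ |∫ z, F n z ∂μ| + |empAvg Zs T k (F n) ω| := abs_sub _ _
      _ ≤ 2 * B := by linarith
  have bddII : BddAbove (Set.range fun n => |(∫ z, F n z ∂(P T)) - ∫ z, F n z ∂(avgMeas P T r)|) := by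
    refine ⟨2 * B, ?_⟩
    rintro x ⟨n, rfl⟩
    have := hIb (P T) hprob_T n
    have := hIb (avgMeas P T r) hprob_r n
    calc |(∫ z, F n z ∂(P T)) - ∫ z, F n z ∂(avgMeas P T r)|
        ≤ |∫ z, F n z ∂(P T)| + |∫ z, F n z ∂(avgMeas P T r)| := abs_sub _ _
      _ ≤ 2 * B := by linarith
  have bddEE : BddAbove (Set.range fun n => |empAvg Zs T r (F n) ω - empAvg Zs T r' (F n) ω|) := by
    refine ⟨2 * B, ?_⟩
    rintro x ⟨n, rfl⟩
    have := hEb r hr1 hrT n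
    have := hEb r' hr'1 hi n
    calc |empAvg Zs T r (F n) ω - empAvg Zs T r' (F n) ω|
        ≤ |empAvg Zs T r (F n) ω| + |empAvg Zs T r' (F n) ω| := abs_sub _ _
      _ ≤ 2 * B := by linarith
  -- triangle inequality
  have htri : dF F (P T) (avgMeas P T r') ≤ dF F (P T) (avgMeas P T r)
      + dPE F (avgMeas P T r) Zs T r ω + dEE F Zs T r r' ω
      + dPE F (avgMeas P T r') Zs T r' ω := by
    rw [dF]
    apply ciSup_le
    intro n
    have b1 : |(∫ z, F n z ∂(P T)) - ∫ z, F n z ∂(avgMeas P T r)| ≤ dF F (P T) (avgMeas P T r) :=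
      le_ciSup bddII n
    have b2 : |(∫ z, F n z ∂(avgMeas P T r)) - empAvg Zs T r (F n) ω| ≤ dPE F (avgMeas P T r) Zs T r ω :=
      le_ciSup (bddIE (avgMeas P T r) hprob_r r hr1 hrT) n
    have b3 : |empAvg Zs T r (F n) ω - empAvg Zs T r' (F n) ω| ≤ dEE F Zs T r r' ω :=
      le_ciSup bddEE n
    have b4 : |(∫ z, F n z ∂(avgMeas P T r')) - empAvg Zs T r' (F n) ω| ≤ dPE F (avgMeas P T r') Zs T r' ω :=
      le_ciSup (bddIE (avgMeas P T r') hprob_r' r' hr'1 hi) n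
    have tri : |(∫ z, F n z ∂(P T)) - ∫ z, F n z ∂(avgMeas P T r')|
        ≤ |(∫ z, F n z ∂(P T)) - ∫ z, F n z ∂(avgMeas P T r)|
          + |(∫ z, F n z ∂(avgMeas P T r)) - empAvg Zs T r (F n) ω|
          + |empAvg Zs T r (F n) ω - empAvg Zs T r' (F n) ω|
          + |(∫ z, F n z ∂(avgMeas P T r')) - empAvg Zs T r' (F n) ω| := by
      have h12 := abs_sub_le (∫ z, F n z ∂(P T)) (∫ z, F n z ∂(avgMeas P T r)) (empAvg Zs T r (F n) ω)
      have h23 := abs_sub_le (∫ z, F n z ∂(P T)) (empAvg Zs T r (F n) ω) (empAvg Zs T r' (F n) ω)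
      have h34 := abs_sub_le (∫ z, F n z ∂(P T)) (empAvg Zs T r' (F n) ω) (∫ z, F n z ∂(avgMeas P T r'))
      have hlast : |empAvg Zs T r' (F n) ω - ∫ z, F n z ∂(avgMeas P T r')|
          = |(∫ z, F n z ∂(avgMeas P T r')) - empAvg Zs T r' (F n) ω| := abs_sub_comm _ _
      linarith
    linarith
  -- now the arithmetic
  have hg1 := hgood i hrT
  have hg2 := hgood (i+1) hi
  have hcast : ∀ k : ℕ, ((2^k : ℕ) : ℝ) = (2:ℝ)^k := by intro k; push_cast; ring
  have hS : 22 * Sfun C1 C2 ((2^(i+1) : ℕ) : ℝ) δ ≤ 16 * Sfun C1 C2 ((2^i : ℕ) : ℝ) δ := by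
    rw [hcast, hcast]
    exact Skey C1 C2 δ hC1 hC2 i
  rw [Ufun, Ufun]
  have h1 : dPE F (avgMeas P T r) Zs T r ω ≤ Sfun C1 C2 ((2^i : ℕ) : ℝ) δ := hg1
  have h2 : dPE F (avgMeas P T r') Zs T r' ω ≤ Sfun C1 C2 ((2^(i+1) : ℕ) : ℝ) δ := hg2
  have h3 : dEE F Zs T r r' ω ≤ 4 * Sfun C1 C2 ((2^i : ℕ) : ℝ) δ := hsmall
  linarith
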